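/- arXiv:0901.4392 — 3 statements merged into one kernel-verified Lean document; each statement's English description precedes it below -/
import Mathlib

section
/- Let σ̂_1², …, σ̂_p² be random variables such that each σ̂_ν² is distributed as σ_ν² χ²_{(n)}/n (no assumption on their joint distribution), where σ_1², …, σ_p² > 0 are constants. Fix k ∈ {1,…,p}, let γ > 0 and α_n = γ n^{−1/2}(log n)^{1/2}, and set b(γ) = [γ√3/(4 + 2√3)]². Let σ_{(1)}² ≥ … ≥ σ_{(p)}² and σ̂_{(1)}² ≥ … ≥ σ̂_{(p)}² denote the ordered population and sample variances, I_in = {l : σ_l² ≥ σ_{(k)}²(1 + α_n)}, I_out = {l : σ_l² ≤ σ_{(k)}²(1 − α_n)}, FE = ∪_{l ∈ I_in} {σ̂_l² < σ̂_{(k)}²}, and FI = ∪_{l ∈ I_out} {σ̂_l² ≥ σ̂_{(k)}²}. Then P(FE ∪ FI) ≤ 2pk n^{−b(γ)} + k n^{−(1 − 2α_n) b(γ)}. -/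
/-!
Write `τ = σ²_{(k)}` and split `α = ε + δ` with `ε = 2α/(2+√3)` and `δ = √3α/(2+√3)`. The Chernoff
bounds for `χ²_{(n)}` give `P(χ² ≥ n(1+ε)) ≤ exp(-3nε²/16)` (for `ε ≤ 1/3`) and
`P(χ² ≤ n(1-δ)) ≤ exp(-nδ²/4)`, and this split makes both equal to `n^{-b}`.

If a variable with `σ_l² ≥ τ(1+α)` is excluded, then either `σ̂_l² < τ(1+ε)`, or
`σ̂_{(k)}² > σ̂_l² ≥ τ(1+ε)`; in the latter case, by pigeonhole, one of the `k` largest sample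
variances belongs to a variable with `σ_j² ≤ τ`, so `σ̂_j² ≥ σ_j²(1+ε)`. False inclusions are
handled symmetrically with the threshold `τ(1-δ)`. At most `k - 1` variables have `σ_l² > τ`, and
for them the lower tail `exp(-nδ²/(4(1+α)²))` is at most `n^{-(1-2α)b}`; every other event of the
union bound has probability at most `n^{-b}`, and there are at most `2p` of them.

`k : Fin p` is 0-based, so the paper's `k` is `k + 1`.
-/

open MeasureTheory ProbabilityTheory Filter

noncomputable section

/-- The chi-squared distribution with `n` degrees of freedom: the law of
`z₁² + ⋯ + z_n²` for i.i.d. standard normal `z_i`. -/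
def chiSqMeasure (n : ℕ) : Measure ℝ :=
  Measure.map (fun x : Fin n → ℝ => ∑ i, (x i) ^ 2)
    (Measure.pi fun _ : Fin n => gaussianReal 0 1)

/-- `ordDesc a k` is the `(k+1)`-th largest of the values `a 0, …, a (p-1)`,
i.e. `a_{(k+1)}` in decreasing-order-statistics notation. -/
def ordDesc {p : ℕ} (a : Fin p → ℝ) (k : Fin p) : ℝ := a (Tuple.sort a k.rev)

open Real

lemma integral_exp_mul_sq_gaussianReal {t : ℝ} (ht : t < 1 / 2) :
    ∫ x, exp (t * x ^ 2) ∂gaussianReal 0 1 = (1 - 2 * t) ^ (-(1 : ℝ) / 2) := by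
  have h2t : 0 < 1 - 2 * t := by linarith
  have hpdf (x : ℝ) : gaussianPDFReal 0 1 x • exp (t * x ^ 2)
      = (√(2 * π))⁻¹ * exp (-(1 / 2 - t) * x ^ 2) := by
    simp only [gaussianPDFReal, NNReal.coe_one, mul_one, sub_zero, smul_eq_mul, mul_assoc,
      ← exp_add]
    ring_nf
  simp_rw [integral_gaussianReal_eq_integral_smul one_ne_zero, hpdf, integral_const_mul,
    integral_gaussian]
  rw [show π / (1 / 2 - t) = 2 * π / (1 - 2 * t) by field_simp, sqrt_div (by positivity),
    neg_div, rpow_neg h2t.le, ← sqrt_eq_rpow]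
  have : √(2 * π) ≠ 0 := by positivity
  field_simp

lemma measurable_sum_sq (n : ℕ) : Measurable fun x : Fin n → ℝ => ∑ i, x i ^ 2 := by
  fun_prop

instance (n : ℕ) : IsProbabilityMeasure (chiSqMeasure n) :=
  Measure.isProbabilityMeasure_map (measurable_sum_sq n).aemeasurable

lemma integral_exp_mul_chiSqMeasure (n : ℕ) {t : ℝ} (ht : t < 1 / 2) :
    ∫ x, exp (t * x) ∂chiSqMeasure n = (1 - 2 * t) ^ (-(n : ℝ) / 2) := by
  rw [chiSqMeasure, integral_map (measurable_sum_sq n).aemeasurable (by fun_prop)]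
  simp_rw [Finset.mul_sum, exp_sum]
  rw [integral_fintype_prod_eq_pow (fun x => exp (t * x ^ 2)),
    integral_exp_mul_sq_gaussianReal ht, Fintype.card_fin, ← rpow_natCast,
    ← rpow_mul (by linarith)]
  ring_nf

lemma integrable_exp_mul_chiSqMeasure (n : ℕ) {t : ℝ} (ht : t < 1 / 2) :
    Integrable (fun x => exp (t * x)) (chiSqMeasure n) := by
  refine Integrable.of_integral_ne_zero ?_
  rw [integral_exp_mul_chiSqMeasure n ht]
  exact (rpow_pos_of_pos (by linarith) _).ne'

lemma mgf_chiSqMeasure (n : ℕ) {t : ℝ} (ht : t < 1 / 2) :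
    mgf id (chiSqMeasure n) t = (1 - 2 * t) ^ (-(n : ℝ) / 2) :=
  integral_exp_mul_chiSqMeasure n ht

lemma le_sub_one_sub_log_of_one_le {y : ℝ} (hy : 1 ≤ y) :
    (y - 1) ^ 2 / (2 * y) ≤ y - 1 - log y := by
  have hy0 : 0 < y := by linarith
  have hlog : log y ≤ (y - y⁻¹) / 2 := by
    rw [← sinh_log hy0]
    exact self_le_sinh_iff.2 (log_nonneg hy)
  have : (y - 1) ^ 2 / (2 * y) = y - 1 - (y - y⁻¹) / 2 := by field_simp; ring
  linarith

lemma le_sub_one_sub_log_of_le_one {y : ℝ} (hy0 : 0 < y) (hy1 : y ≤ 1) :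
    (y - 1) ^ 2 / 2 ≤ y - 1 - log y := by
  have hx : |1 - y| < 1 := by rw [abs_lt]; constructor <;> linarith
  have hsum := hasSum_pow_div_log_of_abs_lt_one hx
  rw [sub_sub_cancel] at hsum
  have := sum_le_hasSum (Finset.range 2) (fun i _ => by positivity) hsum
  norm_num [Finset.sum_range_succ] at this
  nlinarith

-- `(1 - y⁻¹) / 2` is the optimal Chernoff parameter for the threshold `n * y`.
lemma exp_mul_mgf_chiSqMeasure (n : ℕ) {y : ℝ} (hy : 0 < y) :
    exp (-((1 - y⁻¹) / 2) * (n * y)) * mgf id (chiSqMeasure n) ((1 - y⁻¹) / 2)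
      = exp (-(n / 2 * (y - 1 - log y))) := by
  rw [mgf_chiSqMeasure n (by have := inv_pos.2 hy; linarith),
    show 1 - 2 * ((1 - y⁻¹) / 2) = y⁻¹ by ring, inv_rpow hy.le, ← rpow_neg hy.le,
    rpow_def_of_pos hy, ← exp_add]
  congr 1
  field_simp
  ring

lemma chiSqMeasure_real_ge_le (n : ℕ) {ε : ℝ} (hε0 : 0 ≤ ε) (hε : ε ≤ 1 / 3) :
    (chiSqMeasure n).real {x | n * (1 + ε) ≤ x} ≤ exp (-(3 * n * ε ^ 2 / 16)) := by
  have hy : 0 < 1 + ε := by linarith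
  have ht : 0 ≤ (1 - (1 + ε)⁻¹) / 2 := by
    have := inv_le_one_of_one_le₀ (show 1 ≤ 1 + ε by linarith); linarith
  refine (measure_ge_le_exp_mul_mgf (X := id) _ ht
    (integrable_exp_mul_chiSqMeasure n (by have := inv_pos.2 hy; linarith))).trans ?_
  rw [exp_mul_mgf_chiSqMeasure n hy, exp_le_exp, neg_le_neg_iff]
  calc 3 * n * ε ^ 2 / 16 = n / 2 * (ε ^ 2 / (8 / 3)) := by ring
    _ ≤ n / 2 * (ε ^ 2 / (2 * (1 + ε))) := by gcongr; linarith
    _ ≤ n / 2 * (1 + ε - 1 - log (1 + ε)) := by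
        gcongr; simpa using le_sub_one_sub_log_of_one_le (show 1 ≤ 1 + ε by linarith)

lemma chiSqMeasure_real_le_le (n : ℕ) {δ : ℝ} (hδ0 : 0 ≤ δ) (hδ : δ < 1) :
    (chiSqMeasure n).real {x | x ≤ n * (1 - δ)} ≤ exp (-(n * δ ^ 2 / 4)) := by
  have hy : 0 < 1 - δ := by linarith
  have ht : (1 - (1 - δ)⁻¹) / 2 ≤ 0 := by
    have := one_le_inv₀ hy |>.2 (by linarith); linarith
  refine (measure_le_le_exp_mul_mgf (X := id) _ ht
    (integrable_exp_mul_chiSqMeasure n (by linarith))).trans ?_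
  rw [exp_mul_mgf_chiSqMeasure n hy, exp_le_exp, neg_le_neg_iff]
  calc n * δ ^ 2 / 4 = n / 2 * ((1 - δ - 1) ^ 2 / 2) := by ring
    _ ≤ n / 2 * (1 - δ - 1 - log (1 - δ)) := by
        gcongr; exact le_sub_one_sub_log_of_le_one hy (by linarith)

open Finset

section OrderStatistics

variable {p : ℕ} (a : Fin p → ℝ) (k : Fin p)

lemma le_card_filter_le_ordDesc : p - k ≤ #{j | a j ≤ ordDesc a k} := by
  calc p - k = #((Iic k.rev).image (Tuple.sort a)) := by
        rw [card_image_of_injective _ (Tuple.sort a).injective, Fin.card_Iic, Fin.val_rev]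
        omega
    _ ≤ _ := card_le_card fun j hj => by
        obtain ⟨i, hi, rfl⟩ := mem_image.1 hj
        exact mem_filter.2 ⟨mem_univ _, Tuple.monotone_sort a (mem_Iic.1 hi)⟩

lemma le_card_filter_ordDesc_le : k + 1 ≤ #{j | ordDesc a k ≤ a j} := by
  calc k + 1 = #((Ici k.rev).image (Tuple.sort a)) := by
        rw [card_image_of_injective _ (Tuple.sort a).injective, Fin.card_Ici, Fin.val_rev]
        omega
    _ ≤ _ := card_le_card fun j hj => by
        obtain ⟨i, hi, rfl⟩ := mem_image.1 hj
        exact mem_filter.2 ⟨mem_univ _, Tuple.monotone_sort a (mem_Ici.1 hi)⟩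

lemma card_filter_ordDesc_lt_le : #{j | ordDesc a k < a j} ≤ k := by
  have := card_filter_add_card_filter_not (s := univ) (fun j => a j ≤ ordDesc a k)
  simp only [not_le, card_univ, Fintype.card_fin] at this
  have := le_card_filter_le_ordDesc a k
  omega

lemma exists_le_ordDesc_and_ordDesc_le (x : Fin p → ℝ) :
    ∃ j, a j ≤ ordDesc a k ∧ ordDesc x k ≤ x j := by
  have := le_card_filter_le_ordDesc a k
  have := le_card_filter_ordDesc_le x k
  obtain ⟨j, hj⟩ := inter_nonempty_of_card_lt_card_add_card
    (filter_subset (a · ≤ ordDesc a k) univ) (filter_subset (ordDesc x k ≤ x ·) univ)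
    (by rw [card_univ, Fintype.card_fin]; omega)
  simp only [mem_inter, mem_filter] at hj
  exact ⟨j, hj.1.2, hj.2.2⟩

end OrderStatistics

section UnionBound

variable {Ω : Type*} [MeasurableSpace Ω] {P : Measure Ω}

lemma measureReal_biUnion_le_card_mul {ι : Type*} (s : Finset ι) (E : ι → Set Ω) {u : ℝ}
    (h : ∀ i ∈ s, P.real (E i) ≤ u) : P.real (⋃ i ∈ s, E i) ≤ #s * u :=
  (measureReal_biUnion_finset_le s E).trans <|
    (sum_le_card_nsmul s _ u h).trans_eq (nsmul_eq_mul _ _)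

variable [IsFiniteMeasure P] {p : ℕ} (a : Fin p → ℝ) (x : Fin p → Ω → ℝ) (k : Fin p)

lemma measureReal_exists_lt_ordDesc_le {θ c L U : ℝ} (hθ : ordDesc a k < θ) (hL0 : 0 ≤ L)
    (hU0 : 0 ≤ U) (hL : ∀ l, θ ≤ a l → P.real {ω | x l ω < c} ≤ L)
    (hU : ∀ j, a j ≤ ordDesc a k → P.real {ω | c ≤ x j ω} ≤ U) :
    P.real {ω | ∃ l, θ ≤ a l ∧ x l ω < ordDesc (fun ν => x ν ω) k} ≤ k * L + p * U := by
  set A : Finset (Fin p) := {l | θ ≤ a l}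
  set B : Finset (Fin p) := {j | a j ≤ ordDesc a k}
  have hsub : {ω | ∃ l, θ ≤ a l ∧ x l ω < ordDesc (fun ν => x ν ω) k}
      ⊆ (⋃ l ∈ A, {ω | x l ω < c}) ∪ ⋃ j ∈ B, {ω | c ≤ x j ω} := by
    rintro ω ⟨l, hl, hlk⟩
    by_cases hc : x l ω < c
    · exact Or.inl (Set.mem_biUnion (mem_filter.2 ⟨mem_univ _, hl⟩) hc)
    · obtain ⟨j, hj, hjk⟩ := exists_le_ordDesc_and_ordDesc_le a k (x · ω)
      exact Or.inr (Set.mem_biUnion (mem_filter.2 ⟨mem_univ _, hj⟩) (by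
        simp only [Set.mem_ofPred_eq]; linarith [not_lt.1 hc]))
  have hA : #A ≤ k := (card_le_card fun l hl => mem_filter.2 ⟨mem_univ _,
    hθ.trans_le (mem_filter.1 hl).2⟩).trans (card_filter_ordDesc_lt_le a k)
  have hB : #B ≤ p := (card_filter_le _ _).trans_eq (by rw [card_univ, Fintype.card_fin])
  calc _ ≤ P.real (⋃ l ∈ A, {ω | x l ω < c}) + P.real (⋃ j ∈ B, {ω | c ≤ x j ω}) :=
        (measureReal_mono hsub).trans (measureReal_union_le _ _)
    _ ≤ #A * L + #B * U := add_le_add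
        (measureReal_biUnion_le_card_mul A _ fun l hl => hL l (mem_filter.1 hl).2)
        (measureReal_biUnion_le_card_mul B _ fun j hj => hU j (mem_filter.1 hj).2)
    _ ≤ k * L + p * U := by gcongr

lemma measureReal_exists_ordDesc_le_le {θ c U : ℝ} (hθ : θ < ordDesc a k) (hU0 : 0 ≤ U)
    (hU : ∀ l, a l ≤ θ → P.real {ω | c ≤ x l ω} ≤ U)
    (hU' : ∀ j, ordDesc a k ≤ a j → P.real {ω | x j ω < c} ≤ U) :
    P.real {ω | ∃ l, a l ≤ θ ∧ ordDesc (fun ν => x ν ω) k ≤ x l ω} ≤ p * U := by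
  set C : Finset (Fin p) := {l | a l ≤ θ}
  set S : Finset (Fin p) := {j | ordDesc a k ≤ a j}
  have hsub : {ω | ∃ l, a l ≤ θ ∧ ordDesc (fun ν => x ν ω) k ≤ x l ω}
      ⊆ (⋃ l ∈ C, {ω | c ≤ x l ω}) ∪ ⋃ j ∈ S, {ω | x j ω < c} := by
    rintro ω ⟨l, hl, hlk⟩
    by_cases hc : c ≤ x l ω
    · exact Or.inl (Set.mem_biUnion (mem_filter.2 ⟨mem_univ _, hl⟩) hc)
    · obtain ⟨j, hjk, hj⟩ := exists_le_ordDesc_and_ordDesc_le (x · ω) k a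
      exact Or.inr (Set.mem_biUnion (mem_filter.2 ⟨mem_univ _, hj⟩) (by
        simp only [Set.mem_ofPred_eq]; linarith [not_le.1 hc]))
  have hCS : #C + #S ≤ p := by
    rw [← card_union_of_disjoint (disjoint_filter.2 fun l _ hC hS => by linarith)]
    exact (card_le_univ _).trans_eq (Fintype.card_fin p)
  calc _ ≤ P.real (⋃ l ∈ C, {ω | c ≤ x l ω}) + P.real (⋃ j ∈ S, {ω | x j ω < c}) :=
        (measureReal_mono hsub).trans (measureReal_union_le _ _)
    _ ≤ #C * U + #S * U := add_le_add
        (measureReal_biUnion_le_card_mul C _ fun l hl => hU l (mem_filter.1 hl).2)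
        (measureReal_biUnion_le_card_mul S _ fun j hj => hU' j (mem_filter.1 hj).2)
    _ = (#C + #S : ℕ) * U := by push_cast; ring
    _ ≤ p * U := by gcongr

end UnionBound

section ScaledChiSq

variable {Ω : Type*} [MeasurableSpace Ω] {P : Measure Ω} [IsFiniteMeasure P] {n : ℕ}

lemma measureReal_ge_le_of_map_eq_chiSqMeasure {s : ℝ} (hs : 0 < s) {X : Ω → ℝ}
    (hX : P.map (fun ω => n * X ω / s) = chiSqMeasure n) {ε c : ℝ} (hε0 : 0 ≤ ε)
    (hε : ε ≤ 1 / 3) (hc : s * (1 + ε) ≤ c) :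
    P.real {ω | c ≤ X ω} ≤ exp (-(3 * n * ε ^ 2 / 16)) := by
  have hmeas : AEMeasurable (fun ω => n * X ω / s) P :=
    .of_map_ne_zero (hX ▸ IsProbabilityMeasure.ne_zero _)
  calc P.real {ω | c ≤ X ω}
      ≤ P.real ((fun ω => n * X ω / s) ⁻¹' {x | n * (1 + ε) ≤ x}) :=
        measureReal_mono fun ω (hω : c ≤ X ω) => by
          rw [Set.mem_preimage, Set.mem_ofPred_eq, le_div_iff₀ hs, mul_assoc, mul_comm (1 + ε)]
          gcongr
          exact hc.trans hω
    _ = (chiSqMeasure n).real {x | n * (1 + ε) ≤ x} := by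
        rw [← hX]; exact (map_measureReal_apply_of_aemeasurable hmeas measurableSet_Ici).symm
    _ ≤ _ := chiSqMeasure_real_ge_le n hε0 hε

lemma measureReal_lt_le_of_map_eq_chiSqMeasure {s : ℝ} (hs : 0 < s) {X : Ω → ℝ}
    (hX : P.map (fun ω => n * X ω / s) = chiSqMeasure n) {δ c : ℝ} (hδ0 : 0 ≤ δ) (hδ : δ < 1)
    (hc : c ≤ s * (1 - δ)) :
    P.real {ω | X ω < c} ≤ exp (-(n * δ ^ 2 / 4)) := by
  have hmeas : AEMeasurable (fun ω => n * X ω / s) P :=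
    .of_map_ne_zero (hX ▸ IsProbabilityMeasure.ne_zero _)
  calc P.real {ω | X ω < c}
      ≤ P.real ((fun ω => n * X ω / s) ⁻¹' {x | x ≤ n * (1 - δ)}) :=
        measureReal_mono fun ω (hω : X ω < c) => by
          rw [Set.mem_preimage, Set.mem_ofPred_eq, div_le_iff₀ hs, mul_assoc, mul_comm (1 - δ)]
          gcongr
          exact (hω.trans_le hc).le
    _ = (chiSqMeasure n).real {x | x ≤ n * (1 - δ)} := by
        rw [← hX]; exact (map_measureReal_apply_of_aemeasurable hmeas measurableSet_Iic).symm
    _ ≤ _ := chiSqMeasure_real_le_le n hδ0 hδ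

variable {p : ℕ} {σsq : Fin p → ℝ} (hσsq : ∀ ν, 0 < σsq ν) {σhat : Fin p → Ω → ℝ}
  (hdist : ∀ ν, P.map (fun ω => n * σhat ν ω / σsq ν) = chiSqMeasure n) (k : Fin p)
  {α ε δ : ℝ} (hα : 0 < α) (hε0 : 0 ≤ ε) (hε : ε ≤ 1 / 3) (hδ0 : 0 ≤ δ)
include hσsq hdist hα hε0 hε hδ0

lemma measureReal_excluded_le (hεδ : ε + δ = α) :
    P.real {ω | ∃ l, ordDesc σsq k * (1 + α) ≤ σsq l ∧
        σhat l ω < ordDesc (fun ν => σhat ν ω) k}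
      ≤ k * exp (-(n * (δ / (1 + α)) ^ 2 / 4)) + p * exp (-(3 * n * ε ^ 2 / 16)) := by
  have hτ := hσsq (Tuple.sort σsq k.rev)
  have hδα : δ / (1 + α) < 1 := (div_lt_one (by linarith)).2 (by linarith)
  refine measureReal_exists_lt_ordDesc_le σsq σhat k (c := ordDesc σsq k * (1 + ε))
    (lt_mul_right hτ (by linarith)) (by positivity) (by positivity) (fun l hl => ?_)
    fun j hj => measureReal_ge_le_of_map_eq_chiSqMeasure (hσsq j) (hdist j) hε0 hε (by gcongr)
  refine measureReal_lt_le_of_map_eq_chiSqMeasure (hσsq l) (hdist l) (by positivity) hδα ?_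
  calc ordDesc σsq k * (1 + ε) = ordDesc σsq k * (1 + α) * (1 - δ / (1 + α)) := by
        field_simp; rw [← hεδ]; ring
    _ ≤ σsq l * (1 - δ / (1 + α)) := by gcongr

lemma measureReal_included_le (hδ : δ < 1) (hεδ : ε + δ ≤ α) :
    P.real {ω | ∃ l, σsq l ≤ ordDesc σsq k * (1 - α) ∧
        ordDesc (fun ν => σhat ν ω) k ≤ σhat l ω}
      ≤ p * max (exp (-(3 * n * ε ^ 2 / 16))) (exp (-(n * δ ^ 2 / 4))) := by
  have hτ := hσsq (Tuple.sort σsq k.rev)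
  refine measureReal_exists_ordDesc_le_le σsq σhat k (c := ordDesc σsq k * (1 - δ))
    (mul_lt_of_lt_one_right hτ (by linarith)) (by positivity) (fun l hl => ?_) fun j hj => ?_
  · refine (measureReal_ge_le_of_map_eq_chiSqMeasure (hσsq l) (hdist l) hε0 hε ?_).trans
      (le_max_left _ _)
    calc σsq l * (1 + ε) ≤ ordDesc σsq k * ((1 - α) * (1 + ε)) := by
          rw [← mul_assoc]; gcongr
      _ ≤ ordDesc σsq k * (1 - δ) := by gcongr; nlinarith
  · exact (measureReal_lt_le_of_map_eq_chiSqMeasure (hσsq j) (hdist j) hδ0 hδ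
      (by gcongr)).trans (le_max_right _ _)

end ScaledChiSq

section Rate

variable {n : ℕ} {γ α b : ℝ} (hn : 1 ≤ n)
  (hα : α = γ * (n : ℝ) ^ (-(1 : ℝ) / 2) * log n ^ ((1 : ℝ) / 2))
  (hb : b = (γ * √3 / (4 + 2 * √3)) ^ 2)
include hn hα

lemma natCast_mul_sq_eq : n * α ^ 2 = γ ^ 2 * log n := by
  have hn0 : (0 : ℝ) < n := by exact_mod_cast hn
  rw [hα, neg_div, rpow_neg hn0.le, ← sqrt_eq_rpow, ← sqrt_eq_rpow, mul_pow, mul_pow, inv_pow,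
    sq_sqrt hn0.le, sq_sqrt (log_natCast_nonneg n)]
  field_simp

include hb

lemma mul_log_eq_natCast_mul_sq : b * log n = n * (√3 * α / (2 + √3)) ^ 2 / 4 := by
  have h3 : √3 ^ 2 = 3 := sq_sqrt (by norm_num)
  calc b * log n = 3 * (γ ^ 2 * log n) / (4 + 2 * √3) ^ 2 := by
        rw [hb, div_pow, mul_pow, h3]; ring
    _ = n * (√3 * α / (2 + √3)) ^ 2 / 4 := by
        rw [← natCast_mul_sq_eq hn hα, div_pow, mul_pow, h3]; field_simp; ring

lemma exp_neg_natCast_mul_sq_div_four_eq_rpow :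
    exp (-(n * (√3 * α / (2 + √3)) ^ 2 / 4)) = (n : ℝ) ^ (-b) := by
  rw [rpow_def_of_pos (by exact_mod_cast hn), mul_neg, mul_comm (log _),
    mul_log_eq_natCast_mul_sq hn hα hb]

lemma exp_neg_three_mul_natCast_mul_sq_div_sixteen_eq_rpow :
    exp (-(3 * n * (2 * α / (2 + √3)) ^ 2 / 16)) = (n : ℝ) ^ (-b) := by
  rw [← exp_neg_natCast_mul_sq_div_four_eq_rpow hn hα hb, div_pow, div_pow, mul_pow, mul_pow,
    sq_sqrt (by norm_num : (0 : ℝ) ≤ 3)]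
  ring_nf

lemma exp_neg_natCast_mul_sq_div_four_le_rpow (hα0 : 0 ≤ α) :
    exp (-(n * (√3 * α / (2 + √3) / (1 + α)) ^ 2 / 4)) ≤ (n : ℝ) ^ (-(1 - 2 * α) * b) := by
  rw [rpow_def_of_pos (by exact_mod_cast hn), exp_le_exp, neg_mul, mul_neg, neg_le_neg_iff,
    mul_comm, mul_assoc, mul_log_eq_natCast_mul_sq hn hα hb]
  have hq : (1 - 2 * α) * (1 + α) ^ 2 ≤ 1 := by nlinarith [pow_nonneg hα0 3]
  set δ := √3 * α / (2 + √3)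
  calc (1 - 2 * α) * (n * δ ^ 2 / 4)
      = (1 - 2 * α) * (1 + α) ^ 2 * (n * (δ / (1 + α)) ^ 2 / 4) := by field_simp
    _ ≤ n * (δ / (1 + α)) ^ 2 / 4 := mul_le_of_le_one_left (by positivity) hq

lemma pos_and_lt_half_of_rpow_lt_one (hγ : 0 < γ) (h : (n : ℝ) ^ (-(1 - 2 * α) * b) < 1) :
    0 < α ∧ α < 1 / 2 := by
  obtain ⟨hn1, hexp⟩ := ((rpow_lt_one_iff_of_pos (by exact_mod_cast hn)).1 h).resolve_right
    fun h' => h'.1.not_ge (by exact_mod_cast hn)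
  have hα0 : 0 < α := by rw [hα]; have := log_pos hn1; positivity
  have hb0 : 0 < b := by rw [hb]; positivity
  exact ⟨hα0, by nlinarith⟩

end Rate

theorem correct_selection
    {Ω : Type*} [MeasurableSpace Ω] (P : Measure Ω) [IsProbabilityMeasure P]
    (n p : ℕ) (hn : 1 ≤ n)
    -- population variances `σ_ν² > 0`
    (σsq : Fin p → ℝ) (hσsq : ∀ ν, 0 < σsq ν)
    -- sample variances, each marginally distributed as `σ_ν² χ²_{(n)}/n`
    (σhat : Fin p → Ω → ℝ)
    (hdist : ∀ ν, Measure.map (fun ω => (n : ℝ) * σhat ν ω / σsq ν) P = chiSqMeasure n)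
    (k : Fin p) (γ : ℝ) (hγ : 0 < γ)
    (α b : ℝ)
    (hα : α = γ * (n : ℝ) ^ (-(1 : ℝ) / 2) * Real.log n ^ ((1 : ℝ) / 2))
    (hb : b = (γ * Real.sqrt 3 / (4 + 2 * Real.sqrt 3)) ^ 2)
    -- `FE`: some variable with `σ_l² ≥ σ_{(k)}²(1 + α_n)` is excluded
    (FE : Set Ω)
    (hFE : FE = {ω | ∃ l : Fin p, ordDesc σsq k * (1 + α) ≤ σsq l ∧
      σhat l ω < ordDesc (fun ν => σhat ν ω) k})
    -- `FI`: some variable with `σ_l² ≤ σ_{(k)}²(1 − α_n)` is included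
    (FI : Set Ω)
    (hFI : FI = {ω | ∃ l : Fin p, σsq l ≤ ordDesc σsq k * (1 - α) ∧
      ordDesc (fun ν => σhat ν ω) k ≤ σhat l ω}) :
    P (FE ∪ FI) ≤ ENNReal.ofReal
      (2 * p * ((k : ℕ) + 1) * (n : ℝ) ^ (-b) +
        ((k : ℕ) + 1) * (n : ℝ) ^ (-(1 - 2 * α) * b)) := by
  have hU0 : 0 ≤ (n : ℝ) ^ (-b) := by positivity
  have hL0 : 0 ≤ (n : ℝ) ^ (-(1 - 2 * α) * b) := by positivity
  rcases le_or_gt 1 (2 * p * ((k : ℕ) + 1) * (n : ℝ) ^ (-b) +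
      ((k : ℕ) + 1) * (n : ℝ) ^ (-(1 - 2 * α) * b)) with hbig | hsmall
  · exact prob_le_one.trans (ENNReal.one_le_ofReal.2 hbig)
  have hpkU : 0 ≤ (p : ℝ) * k * (n : ℝ) ^ (-b) := by positivity
  obtain ⟨hα0, hα12⟩ := pos_and_lt_half_of_rpow_lt_one hn hα hb hγ (by
    nlinarith [mul_nonneg (Nat.cast_nonneg (α := ℝ) k) hL0])
  have hεδ : 2 * α / (2 + √3) + √3 * α / (2 + √3) = α := by field_simp
  have hε : 2 * α / (2 + √3) ≤ 1 / 3 := by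
    rw [div_le_iff₀ (by positivity)]; nlinarith [one_le_sqrt.2 (by norm_num : (1 : ℝ) ≤ 3)]
  have hε0 : 0 ≤ 2 * α / (2 + √3) := by positivity
  have hPFE := measureReal_excluded_le hσsq hdist k hα0 hε0 hε (by positivity) hεδ
  have hPFI := measureReal_included_le hσsq hdist k hα0 hε0 hε (by positivity) (by linarith) hεδ.le
  rw [← hFE, exp_neg_three_mul_natCast_mul_sq_div_sixteen_eq_rpow hn hα hb] at hPFE
  rw [← hFI, exp_neg_three_mul_natCast_mul_sq_div_sixteen_eq_rpow hn hα hb,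
    exp_neg_natCast_mul_sq_div_four_eq_rpow hn hα hb, max_self] at hPFI
  have hL := exp_neg_natCast_mul_sq_div_four_le_rpow hn hα hb hα0.le
  rw [← ofReal_measureReal]
  refine ENNReal.ofReal_le_ofReal ((measureReal_union_le _ _).trans ?_)
  calc _ ≤ (k * (n : ℝ) ^ (-(1 - 2 * α) * b) + p * (n : ℝ) ^ (-b)) + p * (n : ℝ) ^ (-b) :=
        add_le_add (hPFE.trans (by gcongr)) hPFI
    _ ≤ _ := by nlinarith

end
end

section
/- Let M be a nonzero symmetric p×p real matrix and let ξ be a principal eigenvector of M, i.e. a unit eigenvector whose eigenvalue has maximal absolute value (so that ‖Mξ‖ = ‖M‖₂). Then for any nonzero η ∈ ℝ^p with Mη ≠ 0, ∠(η, Mη) ≤ 3 ∠(η, ξ). -/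
/-!
Write `η = aξ + v` with `a = ⟪ξ, η⟫` and `v ⊥ ξ`. Since `ξ` spans an invariant line of the
symmetric `M`, `⟪η, Mη⟫ = λa² + ⟪v, Mv⟫`, and maximality of `|λ|` gives `|⟪v, Mv⟫| ≤ |λ|‖v‖²`
and `‖Mη‖ ≤ |λ|‖η‖`. Hence `cos ∠(η, Mη) ≥ (a² - ‖v‖²) / ‖η‖² = cos 2∠(η, ξ)`, so
`∠(η, Mη) ≤ 2∠(η, ξ)`.
-/

noncomputable section

def vecNorm {p : ℕ} (x : Fin p → ℝ) : ℝ := Real.sqrt (∑ i, x i ^ 2)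

def angle {p : ℕ} (ξ η : Fin p → ℝ) : ℝ :=
  Real.arccos (|∑ i, ξ i * η i| / (vecNorm ξ * vecNorm η))

open Real Module.End WithLp
open scoped InnerProductSpace RealInnerProductSpace

theorem Real.arccos_le_two_mul_arccos {c x : ℝ} (hc₀ : 0 ≤ c) (hc₁ : c ≤ 1)
    (h : 2 * c ^ 2 - 1 ≤ x) : arccos x ≤ 2 * arccos c := by
  have hθ : 2 * arccos c ≤ π := by linarith [arccos_le_pi_div_two.mpr hc₀]
  calc arccos x ≤ arccos (2 * c ^ 2 - 1) := antitone_arccos h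
    _ = arccos (cos (2 * arccos c)) := by rw [cos_two_mul, cos_arccos (by linarith) hc₁]
    _ = 2 * arccos c := arccos_cos (mul_nonneg zero_le_two (arccos_nonneg c)) hθ

theorem LinearMap.IsSymmetric.norm_apply_le_of_forall_hasEigenvalue {𝕜 E : Type*} [RCLike 𝕜]
    [NormedAddCommGroup E] [InnerProductSpace 𝕜 E] [FiniteDimensional 𝕜 E] {T : E →ₗ[𝕜] E}
    (hT : T.IsSymmetric) {c : ℝ} (hc₀ : 0 ≤ c) (hc : ∀ μ, HasEigenvalue T μ → ‖μ‖ ≤ c)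
    (x : E) : ‖T x‖ ≤ c * ‖x‖ := by
  let b := hT.eigenvectorBasis rfl
  have hcoord (i) : ‖⟪b i, T x⟫_𝕜‖ ≤ c * ‖⟪b i, x⟫_𝕜‖ := by
    rw [← hT, hT.apply_eigenvectorBasis, inner_smul_left, norm_mul, RCLike.norm_conj]
    exact mul_le_mul_of_nonneg_right (hc _ (hT.hasEigenvalue_eigenvalues rfl i)) (norm_nonneg _)
  refine (pow_le_pow_iff_left₀ (norm_nonneg _) (by positivity) two_ne_zero).mp ?_
  calc ‖T x‖ ^ 2 = ∑ i, ‖⟪b i, T x⟫_𝕜‖ ^ 2 := (b.sum_sq_norm_inner_right _).symm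
    _ ≤ ∑ i, (c * ‖⟪b i, x⟫_𝕜‖) ^ 2 := by gcongr with i; exact hcoord i
    _ = (c * ‖x‖) ^ 2 := by simp only [mul_pow, ← Finset.mul_sum, b.sum_sq_norm_inner_right]

section

variable {E : Type*} [NormedAddCommGroup E] [InnerProductSpace ℝ E]

def lineAngle (x y : E) : ℝ := arccos (|⟪x, y⟫| / (‖x‖ * ‖y‖))

theorem lineAngle_nonneg (x y : E) : 0 ≤ lineAngle x y := arccos_nonneg _

namespace LinearMap.IsSymmetric

variable {T : E →ₗ[ℝ] E} (hT : T.IsSymmetric) {ξ : E} {lam : ℝ} (hξ : ‖ξ‖ = 1)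
  (hTξ : T ξ = lam • ξ) (hbound : ∀ x, ‖T x‖ ≤ |lam| * ‖x‖)
include hT hξ hTξ hbound

theorem abs_mul_two_mul_inner_sq_sub_le_abs_inner_apply (η : E) :
    |lam| * (2 * ⟪ξ, η⟫ ^ 2 - ‖η‖ ^ 2) ≤ |⟪η, T η⟫| := by
  set a := ⟪ξ, η⟫
  set v := η - a • ξ
  have hξTη : ⟪ξ, T η⟫ = lam * a := by rw [← hT, hTξ, real_inner_smul_left]
  have hv_inner : ⟪v, T v⟫ = ⟪η, T η⟫ - lam * a ^ 2 := by
    simp only [v, map_sub, map_smul, hTξ, inner_sub_left, inner_sub_right, real_inner_smul_left,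
      real_inner_smul_right, hξTη, real_inner_self_eq_norm_sq, hξ, real_inner_comm ξ η]
    ring
  have hv_norm : ‖v‖ ^ 2 = ‖η‖ ^ 2 - a ^ 2 := by
    rw [norm_sub_sq_real, norm_smul, real_inner_smul_right, hξ, real_inner_comm, Real.norm_eq_abs,
      mul_one, sq_abs]
    ring
  have hv_bound : |⟪v, T v⟫| ≤ |lam| * ‖v‖ ^ 2 :=
    calc |⟪v, T v⟫| ≤ ‖v‖ * ‖T v‖ := abs_real_inner_le_norm v (T v)
      _ ≤ ‖v‖ * (|lam| * ‖v‖) := mul_le_mul_of_nonneg_left (hbound v) (norm_nonneg v)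
      _ = |lam| * ‖v‖ ^ 2 := by ring
  rw [hv_inner, hv_norm] at hv_bound
  have hrev := abs_sub_abs_le_abs_sub (lam * a ^ 2) ⟪η, T η⟫
  rw [abs_sub_comm, abs_mul, abs_of_nonneg (sq_nonneg a)] at hrev
  linarith

theorem lineAngle_apply_le_two_mul {η : E} (hTη : T η ≠ 0) :
    lineAngle η (T η) ≤ 2 * lineAngle η ξ := by
  have hη : 0 < ‖η‖ := norm_pos_iff.mpr fun h => hTη (by rw [h, map_zero])
  have hc₁ : |⟪η, ξ⟫| / ‖η‖ ≤ 1 := by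
    rw [div_le_one hη]; simpa [hξ] using abs_real_inner_le_norm η ξ
  rw [lineAngle, lineAngle, hξ, mul_one]
  refine arccos_le_two_mul_arccos (by positivity) hc₁ ?_
  have hkey := hT.abs_mul_two_mul_inner_sq_sub_le_abs_inner_apply hξ hTξ hbound η
  have hratio : ‖T η‖ / ‖η‖ ≤ |lam| := (div_le_iff₀ hη).mpr (hbound η)
  have hrw : (2 * (|⟪η, ξ⟫| / ‖η‖) ^ 2 - 1) * (‖η‖ * ‖T η‖) =
      (2 * ⟪ξ, η⟫ ^ 2 - ‖η‖ ^ 2) * (‖T η‖ / ‖η‖) := by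
    rw [div_pow, sq_abs, real_inner_comm]; field_simp
  rw [le_div_iff₀ (mul_pos hη (norm_pos_iff.mpr hTη)), hrw]
  rcases le_total 0 (2 * ⟪ξ, η⟫ ^ 2 - ‖η‖ ^ 2) with hpos | hneg
  · calc _ ≤ (2 * ⟪ξ, η⟫ ^ 2 - ‖η‖ ^ 2) * |lam| := mul_le_mul_of_nonneg_left hratio hpos
      _ ≤ |⟪η, T η⟫| := by linarith
  · exact (mul_nonpos_of_nonpos_of_nonneg hneg (by positivity)).trans (abs_nonneg _)

end LinearMap.IsSymmetric

end

theorem angle_eq_lineAngle {p : ℕ} (x y : Fin p → ℝ) :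
    angle x y = lineAngle (toLp 2 x) (toLp 2 y) := by
  simp [angle, lineAngle, vecNorm, EuclideanSpace.norm_eq, PiLp.inner_apply, mul_comm]

theorem angle_image_le_three_angle_eigvec_general
    {p : ℕ} (M : Matrix (Fin p) (Fin p) ℝ)
    (hsymm : M.IsSymm)
    (ξ : Fin p → ℝ) (hξ : vecNorm ξ = 1)
    -- `ξ` is an eigenvector whose eigenvalue has maximal absolute value
    (heig : ∃ lam : ℝ, M.mulVec ξ = lam • ξ ∧
      ∀ (μ : ℝ) (w : Fin p → ℝ), w ≠ 0 → M.mulVec w = μ • w → |μ| ≤ |lam|)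
    (η : Fin p → ℝ) (hMη : M.mulVec η ≠ 0) :
    angle η (M.mulVec η) ≤ 3 * angle η ξ := by
  obtain ⟨lam, hMξ, hmax⟩ := heig
  set T := M.toEuclideanLin
  have hT_toLp (x : Fin p → ℝ) : T (toLp 2 x) = toLp 2 (M.mulVec x) := rfl
  have hT : T.IsSymmetric := Matrix.isSymmetric_toEuclideanLin_iff.mpr (by simpa using hsymm)
  have hbound (x : EuclideanSpace ℝ (Fin p)) : ‖T x‖ ≤ |lam| * ‖x‖ := by
    refine hT.norm_apply_le_of_forall_hasEigenvalue (abs_nonneg lam) (fun μ hμ => ?_) x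
    obtain ⟨w, hw⟩ := hμ.exists_hasEigenvector
    exact hmax μ (ofLp w) (by simpa using hw.2) (congrArg ofLp hw.apply_eq_smul)
  have hξ' : ‖toLp 2 ξ‖ = 1 := by simpa [vecNorm, EuclideanSpace.norm_eq] using hξ
  have hTξ : T (toLp 2 ξ) = lam • toLp 2 ξ := by rw [hT_toLp, hMξ, toLp_smul]
  have hTη : T (toLp 2 η) ≠ 0 := by simpa [hT_toLp] using hMη
  rw [angle_eq_lineAngle, angle_eq_lineAngle, ← hT_toLp]
  calc lineAngle (toLp 2 η) (T (toLp 2 η)) ≤ 2 * lineAngle (toLp 2 η) (toLp 2 ξ) :=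
        hT.lineAngle_apply_le_two_mul hξ' hTξ hbound hTη
    _ ≤ 3 * lineAngle (toLp 2 η) (toLp 2 ξ) := by linarith [lineAngle_nonneg (toLp 2 η) (toLp 2 ξ)]

theorem angle_image_le_three_angle_eigvec
    {p : ℕ} (M : Matrix (Fin p) (Fin p) ℝ)
    (hsymm : M.IsSymm) (hM : M ≠ 0)
    (ξ : Fin p → ℝ) (hξ : vecNorm ξ = 1)
    -- `ξ` is an eigenvector whose eigenvalue has maximal absolute value
    (heig : ∃ lam : ℝ, M.mulVec ξ = lam • ξ ∧
      ∀ (μ : ℝ) (w : Fin p → ℝ), w ≠ 0 → M.mulVec w = μ • w → |μ| ≤ |lam|)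
    (η : Fin p → ℝ) (hη : η ≠ 0) (hMη : M.mulVec η ≠ 0) :
    angle η (M.mulVec η) ≤ 3 * angle η ξ :=
  angle_image_le_three_angle_eigvec_general M hsymm ξ hξ heig η hMη

end
end

section
/- Let A and E be symmetric p×p real matrices with p ≥ 2. Let λ₁(A) ≥ λ₂(A) ≥ … denote the eigenvalues of A in decreasing order, let q₁ be a unit eigenvector of A for λ₁(A), and suppose the spectral gap δ = λ₁(A) − λ₂(A) is positive and ‖E‖₂ ≤ δ/5. If q̂₁ is a unit eigenvector of A + E with eigenvalue λ* satisfying q₁ᵀq̂₁ ≥ 1/√2, then λ* ≥ λ₁(A) − √2 ‖E‖₂ and λ* − λ₂(A+E) ≥ δ[1 − (1 + √2)/5] > 0; consequently λ* = λ₁(A+E), i.e. q̂₁ is a principal eigenvector of A + E. -/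
/-!
STATEMENT 11 (Johnstone–Lu, perturbation bound, after Golub–Van Loan Thm 8.1.10):
Let `A, E` be symmetric `p×p` matrices, `p ≥ 2`, `q₁` a unit eigenvector of `A` for
the largest eigenvalue `λ₁(A)`, `δ = λ₁(A) − λ₂(A) > 0`, `‖E‖₂ ≤ δ/5`. If `q̂₁` is a
unit eigenvector of `A + E` with eigenvalue `λ*` and `q₁ᵀq̂₁ ≥ 1/√2`, then
`λ* ≥ λ₁(A) − √2‖E‖₂`, `λ* − λ₂(A+E) ≥ δ[1 − (1 + √2)/5] > 0`, and consequently
`λ* = λ₁(A+E)`.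
-/

noncomputable section

/-- The matrix 2-norm (operator/spectral norm) `‖A‖₂ = sup{‖Ax‖₂ : ‖x‖₂ = 1}`. -/
def specNorm {p : ℕ} (A : Matrix (Fin p) (Fin p) ℝ) : ℝ :=
  sSup ((fun x => vecNorm (A.mulVec x)) '' {x | vecNorm x = 1})

/-- `eigDesc hA k` is the `(k+1)`-th largest eigenvalue `λ_{k+1}(A)` of the
symmetric (Hermitian) real matrix `A`. -/
def eigDesc {p : ℕ} {A : Matrix (Fin p) (Fin p) ℝ} (hA : A.IsHermitian) (k : Fin p) : ℝ :=
  ordDesc hA.eigenvalues k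

/-
Pairing `(A + E) q̂₁ = λ* q̂₁` with `q₁` and using `A q₁ = λ₁(A) q₁` gives
`(λ* - λ₁(A)) q₁ᵀq̂₁ = q₁ᵀ E q̂₁`, so `q₁ᵀq̂₁ ≥ 1/√2` bounds `λ₁(A) - λ*` by `√2 ‖E‖₂`.
Weyl's inequality `λ₂(A + E) ≤ λ₂(A) + ‖E‖₂` follows from Courant–Fischer with a test vector
in the span of the top two eigenvectors of `A + E` that is orthogonal to the top eigenvector
of `A`. Together they give the gap, and an eigenvalue of `A + E` above `λ₂(A + E)` can only
be `λ₁(A + E)`.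
-/

open Matrix WithLp
open scoped RealInnerProductSpace

lemma OrthonormalBasis.exists_orthogonal_supported_on_pair {ι E : Type*} [Fintype ι]
    [DecidableEq ι] [NormedAddCommGroup E] [InnerProductSpace ℝ E] (b : OrthonormalBasis ι ℝ E)
    {i₀ i₁ : ι} (h : i₀ ≠ i₁) (v : E) :
    ∃ x ≠ 0, ⟪v, x⟫ = 0 ∧ ∀ i, ⟪b i, x⟫ ≠ 0 → i = i₀ ∨ i = i₁ := by
  by_cases hv : ⟪v, b i₀⟫ = 0
  · refine ⟨b i₀, b.orthonormal.ne_zero i₀, hv, fun i hi => Or.inl ?_⟩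
    by_contra hne
    exact hi (b.inner_eq_zero hne)
  refine ⟨⟪v, b i₁⟫ • b i₀ - ⟪v, b i₀⟫ • b i₁, fun h0 => hv ?_, ?_, fun i hi => ?_⟩
  · simpa [inner_sub_right, real_inner_smul_right, b.inner_eq_ite, h.symm] using
      congrArg (⟪b i₁, ·⟫) h0
  · simp only [inner_sub_right, real_inner_smul_right]
    ring
  · by_contra! hne
    simp [inner_sub_right, real_inner_smul_right, b.inner_eq_ite, hne.1, hne.2] at hi

lemma sub_norm_div_le_of_le_inner {E : Type*} [NormedAddCommGroup E] [InnerProductSpace ℝ E]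
    {A B : E →L[ℝ] E} (hA : (A : E →ₗ[ℝ] E).IsSymmetric) {q q' : E} (hq : ‖q‖ = 1)
    (hq' : ‖q'‖ = 1) {l l' c : ℝ} (hAq : A q = l • q) (hABq' : (A + B) q' = l' • q')
    (hc : 0 < c) (hcq : c ≤ ⟪q, q'⟫) : l - ‖B‖ / c ≤ l' := by
  have hkey : (l' - l) * ⟪q, q'⟫ = ⟪q, B q'⟫ := by
    have hsymm : ⟪q, A q'⟫ = l * ⟪q, q'⟫ := by
      rw [← ContinuousLinearMap.coe_coe A, ← hA, ContinuousLinearMap.coe_coe, hAq,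
        real_inner_smul_left]
    have hsum : ⟪q, (A + B) q'⟫ = l' * ⟪q, q'⟫ := by rw [hABq', real_inner_smul_right]
    rw [_root_.add_apply, inner_add_right, hsymm] at hsum
    linarith
  have hB : |⟪q, B q'⟫| ≤ ‖B‖ := by
    calc |⟪q, B q'⟫| ≤ ‖q‖ * ‖B q'‖ := abs_real_inner_le_norm _ _
      _ ≤ ‖B‖ := by simpa [hq, hq'] using B.le_opNorm q'
  rw [sub_le_comm, le_div_iff₀ hc]
  rcases le_or_gt l l' with hll | hll
  · nlinarith [abs_nonneg ⟪q, B q'⟫]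
  · nlinarith [neg_abs_le ⟪q, B q'⟫]

namespace Matrix.IsHermitian

variable {n : Type*} [Fintype n] [DecidableEq n] {M : Matrix n n ℝ} (hM : M.IsHermitian)
include hM

lemma isSymmetric_toEuclideanCLM :
    ((toEuclideanCLM (𝕜 := ℝ) M : EuclideanSpace ℝ n →L[ℝ] EuclideanSpace ℝ n) :
      EuclideanSpace ℝ n →ₗ[ℝ] EuclideanSpace ℝ n).IsSymmetric :=
  isSymmetric_toEuclideanLin_iff.mpr hM

lemma toEuclideanCLM_eigenvectorBasis (i : n) :
    toEuclideanCLM (𝕜 := ℝ) M (hM.eigenvectorBasis i) = hM.eigenvalues i • hM.eigenvectorBasis i :=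
  congrArg (toLp 2) (hM.mulVec_eigenvectorBasis i)

lemma inner_eigenvectorBasis_toEuclideanCLM (x : EuclideanSpace ℝ n) (i : n) :
    ⟪hM.eigenvectorBasis i, toEuclideanCLM (𝕜 := ℝ) M x⟫ =
      hM.eigenvalues i * ⟪hM.eigenvectorBasis i, x⟫ := by
  rw [← ContinuousLinearMap.coe_coe, ← hM.isSymmetric_toEuclideanCLM, ContinuousLinearMap.coe_coe,
    toEuclideanCLM_eigenvectorBasis, real_inner_smul_left]

lemma inner_toEuclideanCLM_self (x : EuclideanSpace ℝ n) :
    ⟪x, toEuclideanCLM (𝕜 := ℝ) M x⟫ = ∑ i, hM.eigenvalues i * ⟪hM.eigenvectorBasis i, x⟫ ^ 2 := by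
  rw [← hM.eigenvectorBasis.sum_inner_mul_inner]
  refine Finset.sum_congr rfl fun i _ => ?_
  rw [inner_eigenvectorBasis_toEuclideanCLM, real_inner_comm]
  ring

lemma inner_toEuclideanCLM_self_le (x : EuclideanSpace ℝ n) {t : ℝ}
    (h : ∀ i, ⟪hM.eigenvectorBasis i, x⟫ ≠ 0 → hM.eigenvalues i ≤ t) :
    ⟪x, toEuclideanCLM (𝕜 := ℝ) M x⟫ ≤ t * ‖x‖ ^ 2 := by
  rw [hM.inner_toEuclideanCLM_self, ← hM.eigenvectorBasis.sum_sq_inner_right, Finset.mul_sum]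
  refine Finset.sum_le_sum fun i _ => ?_
  by_cases hi : ⟪hM.eigenvectorBasis i, x⟫ = 0
  · simp [hi]
  · exact mul_le_mul_of_nonneg_right (h i hi) (sq_nonneg _)

lemma le_inner_toEuclideanCLM_self (x : EuclideanSpace ℝ n) {t : ℝ}
    (h : ∀ i, ⟪hM.eigenvectorBasis i, x⟫ ≠ 0 → t ≤ hM.eigenvalues i) :
    t * ‖x‖ ^ 2 ≤ ⟪x, toEuclideanCLM (𝕜 := ℝ) M x⟫ := by
  rw [hM.inner_toEuclideanCLM_self, ← hM.eigenvectorBasis.sum_sq_inner_right, Finset.mul_sum]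
  refine Finset.sum_le_sum fun i _ => ?_
  by_cases hi : ⟪hM.eigenvectorBasis i, x⟫ = 0
  · simp [hi]
  · exact mul_le_mul_of_nonneg_right (h i hi) (sq_nonneg _)

lemma exists_eigenvalues_eq {x : EuclideanSpace ℝ n} (hx : x ≠ 0) {t : ℝ}
    (hxt : toEuclideanCLM (𝕜 := ℝ) M x = t • x) : ∃ i, hM.eigenvalues i = t := by
  obtain ⟨i, hi⟩ : ∃ i, ⟪hM.eigenvectorBasis i, x⟫ ≠ 0 := by
    by_contra! h
    refine hx (hM.eigenvectorBasis.repr.map_eq_zero_iff.mp ?_)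
    ext i
    simpa [OrthonormalBasis.repr_apply_apply] using h i
  refine ⟨i, mul_right_cancel₀ hi ?_⟩
  rw [← inner_eigenvectorBasis_toEuclideanCLM, hxt, real_inner_smul_right]

end Matrix.IsHermitian

lemma vecNorm_eq_norm {p : ℕ} (x : Fin p → ℝ) : vecNorm x = ‖toLp 2 x‖ := by
  simp [vecNorm, EuclideanSpace.norm_eq]

lemma specNorm_eq_norm_toEuclideanCLM {p : ℕ} (M : Matrix (Fin p) (Fin p) ℝ) :
    specNorm M = ‖toEuclideanCLM (𝕜 := ℝ) M‖ := by
  rw [← ContinuousLinearMap.sSup_sphere_eq_norm, specNorm]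
  congr 1
  ext r
  constructor
  · rintro ⟨x, hx, rfl⟩
    exact ⟨toLp 2 x, by simpa [vecNorm_eq_norm] using hx, by simp [vecNorm_eq_norm]⟩
  · rintro ⟨x, hx, rfl⟩
    exact ⟨ofLp x, by simpa [vecNorm_eq_norm] using hx, vecNorm_eq_norm _⟩

section SortedEigenvalues

variable {p : ℕ}

lemma le_ordDesc_zero (hp : 0 < p) (a : Fin p → ℝ) (j : Fin p) : a j ≤ ordDesc a ⟨0, hp⟩ := by
  have hj : (Tuple.sort a).symm j ≤ Fin.rev ⟨0, hp⟩ := by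
    have := ((Tuple.sort a).symm j).is_lt
    simp only [Fin.le_def, Fin.val_rev]; omega
  simpa [ordDesc] using Tuple.monotone_sort a hj

lemma le_ordDesc_one (hp : 1 < p) (a : Fin p → ℝ) {j : Fin p}
    (hj : j ≠ Tuple.sort a (Fin.rev ⟨0, Nat.zero_lt_of_lt hp⟩)) : a j ≤ ordDesc a ⟨1, hp⟩ := by
  have hj' : (Tuple.sort a).symm j ≤ Fin.rev ⟨1, hp⟩ := by
    have hne : (Tuple.sort a).symm j ≠ Fin.rev ⟨0, Nat.zero_lt_of_lt hp⟩ := by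
      rw [Ne, Equiv.symm_apply_eq]; exact hj
    have hlt := ((Tuple.sort a).symm j).is_lt
    simp only [Ne, Fin.ext_iff, Fin.le_def, Fin.val_rev] at hne ⊢; omega
  simpa [ordDesc] using Tuple.monotone_sort a hj'

theorem eigDesc_one_add_le (hp : 1 < p) {A E : Matrix (Fin p) (Fin p) ℝ} (hA : A.IsHermitian)
    (hE : E.IsHermitian) :
    eigDesc (hA.add hE) ⟨1, hp⟩ ≤ eigDesc hA ⟨1, hp⟩ + ‖toEuclideanCLM (𝕜 := ℝ) E‖ := by
  set hM := hA.add hE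
  set i₀ := Tuple.sort hM.eigenvalues (Fin.rev ⟨0, Nat.zero_lt_of_lt hp⟩)
  set i₁ := Tuple.sort hM.eigenvalues (Fin.rev ⟨1, hp⟩)
  have hi : i₀ ≠ i₁ := (Tuple.sort _).injective.ne (Fin.rev_injective.ne (by simp))
  obtain ⟨x, hx, hxv, hsupp⟩ := hM.eigenvectorBasis.exists_orthogonal_supported_on_pair hi
    (hA.eigenvectorBasis (Tuple.sort hA.eigenvalues (Fin.rev ⟨0, Nat.zero_lt_of_lt hp⟩)))
  have hAE : eigDesc hM ⟨1, hp⟩ * ‖x‖ ^ 2 ≤ ⟪x, toEuclideanCLM (𝕜 := ℝ) (A + E) x⟫ := by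
    refine hM.le_inner_toEuclideanCLM_self x fun i hxi => ?_
    rcases hsupp i hxi with h | h <;> rw [h]
    · exact le_ordDesc_zero (Nat.zero_lt_of_lt hp) hM.eigenvalues i₁
    · exact le_rfl
  have hA' : ⟪x, toEuclideanCLM (𝕜 := ℝ) A x⟫ ≤ eigDesc hA ⟨1, hp⟩ * ‖x‖ ^ 2 := by
    refine hA.inner_toEuclideanCLM_self_le x fun i hxi => le_ordDesc_one hp _ ?_
    rintro rfl
    exact hxi hxv
  have hE' : ⟪x, toEuclideanCLM (𝕜 := ℝ) E x⟫ ≤ ‖toEuclideanCLM (𝕜 := ℝ) E‖ * ‖x‖ ^ 2 :=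
    calc ⟪x, toEuclideanCLM (𝕜 := ℝ) E x⟫ ≤ ‖x‖ * ‖toEuclideanCLM (𝕜 := ℝ) E x‖ :=
          real_inner_le_norm _ _
      _ ≤ ‖x‖ * (‖toEuclideanCLM (𝕜 := ℝ) E‖ * ‖x‖) := by
          gcongr; exact ContinuousLinearMap.le_opNorm _ _
      _ = ‖toEuclideanCLM (𝕜 := ℝ) E‖ * ‖x‖ ^ 2 := by ring
  rw [map_add, _root_.add_apply, inner_add_right] at hAE
  exact le_of_mul_le_mul_right (by linarith) (by positivity : 0 < ‖x‖ ^ 2)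

theorem eq_eigDesc_zero_of_eigDesc_one_lt (hp : 1 < p) {M : Matrix (Fin p) (Fin p) ℝ}
    (hM : M.IsHermitian) {x : EuclideanSpace ℝ (Fin p)} (hx : x ≠ 0) {t : ℝ}
    (hxt : toEuclideanCLM (𝕜 := ℝ) M x = t • x) (ht : eigDesc hM ⟨1, hp⟩ < t) :
    t = eigDesc hM ⟨0, Nat.zero_lt_of_lt hp⟩ := by
  obtain ⟨i, rfl⟩ := hM.exists_eigenvalues_eq hx hxt
  by_contra hne
  refine ht.not_ge (le_ordDesc_one hp _ ?_)
  rintro rfl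
  exact hne rfl

end SortedEigenvalues

theorem principal_eigenvector_perturbation
    {p : ℕ} (hp : 2 ≤ p)
    (A E : Matrix (Fin p) (Fin p) ℝ)
    (hA : A.IsHermitian) (hE : E.IsHermitian)
    -- `q₁` is a unit eigenvector of `A` for the largest eigenvalue `λ₁(A)`
    (q₁ : Fin p → ℝ) (hq₁ : vecNorm q₁ = 1)
    (hq₁eig : A.mulVec q₁ = (eigDesc hA ⟨0, by omega⟩) • q₁)
    -- spectral gap `δ = λ₁(A) − λ₂(A)`
    (δ : ℝ) (hδ : δ = eigDesc hA ⟨0, by omega⟩ - eigDesc hA ⟨1, by omega⟩)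
    (hδpos : 0 < δ) (hEnorm : specNorm E ≤ δ / 5)
    -- `q̂₁` is a unit eigenvector of `A + E` with eigenvalue `λ*`, `q₁ᵀq̂₁ ≥ 1/√2`
    (qhat₁ : Fin p → ℝ) (hqhat₁ : vecNorm qhat₁ = 1)
    (lamstar : ℝ) (hqhat₁eig : (A + E).mulVec qhat₁ = lamstar • qhat₁)
    (hdot : 1 / Real.sqrt 2 ≤ ∑ i, q₁ i * qhat₁ i) :
    eigDesc hA ⟨0, by omega⟩ - Real.sqrt 2 * specNorm E ≤ lamstar ∧
    δ * (1 - (1 + Real.sqrt 2) / 5) ≤ lamstar - eigDesc (hA.add hE) ⟨1, by omega⟩ ∧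
    0 < δ * (1 - (1 + Real.sqrt 2) / 5) ∧
    lamstar = eigDesc (hA.add hE) ⟨0, by omega⟩ := by
  rw [specNorm_eq_norm_toEuclideanCLM] at hEnorm ⊢
  rw [vecNorm_eq_norm] at hq₁ hqhat₁
  have hq₁eig' : toEuclideanCLM (𝕜 := ℝ) A (toLp 2 q₁) = eigDesc hA ⟨0, by omega⟩ • toLp 2 q₁ :=
    congrArg (toLp 2) hq₁eig
  have hqhat₁eig' : toEuclideanCLM (𝕜 := ℝ) (A + E) (toLp 2 qhat₁) = lamstar • toLp 2 qhat₁ :=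
    congrArg (toLp 2) hqhat₁eig
  have hdot' : 1 / √2 ≤ ⟪toLp 2 q₁, toLp 2 qhat₁⟫ := by
    simpa [PiLp.inner_apply, mul_comm] using hdot
  have hlow : eigDesc hA ⟨0, by omega⟩ - √2 * ‖toEuclideanCLM (𝕜 := ℝ) E‖ ≤ lamstar := by
    have := sub_norm_div_le_of_le_inner hA.isSymmetric_toEuclideanCLM hq₁ hqhat₁ hq₁eig'
      (by rwa [map_add] at hqhat₁eig') (by positivity) hdot'
    rwa [div_div_eq_mul_div, div_one, mul_comm] at this
  have hweyl := eigDesc_one_add_le hp hA hE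
  have hsqrt2 : √2 < 4 := by
    rw [Real.sqrt_lt' (by norm_num)]; norm_num
  have hgap : δ * (1 - (1 + √2) / 5) ≤ lamstar - eigDesc (hA.add hE) ⟨1, by omega⟩ := by
    linarith [mul_le_mul_of_nonneg_left hEnorm (by positivity : (0 : ℝ) ≤ 1 + √2)]
  have hpos : 0 < δ * (1 - (1 + √2) / 5) := mul_pos hδpos (by linarith)
  refine ⟨hlow, hgap, hpos, eq_eigDesc_zero_of_eigDesc_one_lt hp _ ?_ hqhat₁eig' (by linarith)⟩
  rw [← norm_ne_zero_iff, hqhat₁]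
  exact one_ne_zero
end
end
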